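/- arXiv:1604.00115 — 4 statements merged into one kernel-verified Lean document; each statement's English description precedes it below -/
import Mathlib

section
/- Let k be a field and let F = Z·X² + (a₀₁₁Y² + a₀₁₂YZ + a₀₂₂Z²)·X + (a₁₁₁Y³ + a₁₁₂Y²Z + a₁₂₂YZ² + a₂₂₂Z³) be a ternary cubic form over k. Let s,t,u ∈ k with u ≠ 0 and F(s,t,u) = 0. Set Q(t,u) = a₀₁₁t² + a₀₁₂tu + a₀₂₂u², L₁(X,Y,Z) = u²a₀₁₁X + u²a₁₁₁Y + u(a₁₁₁t + a₁₁₂u)Z, and L₂(X,Y,Z) = u(a₀₁₁t + a₀₁₂u)X + (a₁₁₁t² + a₁₁₂tu + a₁₂₂u²)Z. Then the 3×3 matrix M_P with rows (0, Z, −Y), (uY − tZ, 0, −u²X − (Q(t,u) + su)Z), (uX − sZ, L₁(X,Y,Z), L₂(X,Y,Z)) satisfies det(M_P) = −u³·F(X,Y,Z) as polynomials in k[X,Y,Z]. In particular, M_P is a linear determinantal representation of the cubic defined by F over k. -/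
open MvPolynomial Matrix

/-- A ternary cubic form `F` defines a smooth plane cubic if it is homogeneous of
degree 3 and `F` together with its three partial derivatives have no common zero
other than the origin over an algebraic closure of `k`. -/
def IsSmoothCubic (k : Type) [Field k] (F : MvPolynomial (Fin 3) k) : Prop :=
  F.IsHomogeneous 3 ∧
    ∀ p : Fin 3 → AlgebraicClosure k,
      (MvPolynomial.aeval p) F = 0 →
      (∀ i : Fin 3, (MvPolynomial.aeval p) (MvPolynomial.pderiv i F) = 0) →
      p = 0

/-- Nonzero solutions of `F = 0` in `k³`. -/
def Sol (k : Type) [Field k] (F : MvPolynomial (Fin 3) k) : Type :=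
  {v : Fin 3 → k // v ≠ 0 ∧ MvPolynomial.eval v F = 0}

/-- Two nonzero solutions give the same projective point iff they differ by a
nonzero scalar. -/
def PointRel (k : Type) [Field k] (F : MvPolynomial (Fin 3) k) (v w : Sol k F) : Prop :=
  ∃ c : kˣ, w.val = c • v.val

/-- The set `C(k)` of `k`-rational points of the plane cubic defined by `F`. -/
def RatPoint (k : Type) [Field k] (F : MvPolynomial (Fin 3) k) : Type :=
  Quot (PointRel k F)

/-- The matrix of linear forms `X·M₀ + Y·M₁ + Z·M₂` attached to a triple of
`3×3` matrices over `k`. -/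
noncomputable def linMat (k : Type) [Field k] (M : Fin 3 → Matrix (Fin 3) (Fin 3) k) :
    Matrix (Fin 3) (Fin 3) (MvPolynomial (Fin 3) k) :=
  fun i j => ∑ m : Fin 3, MvPolynomial.X m * MvPolynomial.C (M m i j)

/-- A triple `M₀, M₁, M₂` of matrices is a linear determinantal representation of
the cubic defined by `F` if `F = λ · det (X·M₀ + Y·M₁ + Z·M₂)` for some `λ ∈ k^×`. -/
def IsLDR (k : Type) [Field k] (F : MvPolynomial (Fin 3) k)
    (M : Fin 3 → Matrix (Fin 3) (Fin 3) k) : Prop :=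
  ∃ lam : k, lam ≠ 0 ∧ F = MvPolynomial.C lam * (linMat k M).det

/-- Two linear determinantal representations are equivalent if `M' = A·M·B` for
invertible matrices `A, B ∈ GL₃(k)`. -/
def LDRRel (k : Type) [Field k] (F : MvPolynomial (Fin 3) k)
    (M M' : {M : Fin 3 → Matrix (Fin 3) (Fin 3) k // IsLDR k F M}) : Prop :=
  ∃ A B : GL (Fin 3) k, ∀ m : Fin 3,
    M'.val m = (A : Matrix (Fin 3) (Fin 3) k) * M.val m * (B : Matrix (Fin 3) (Fin 3) k)

/-- The set `LDR(C)` of equivalence classes of linear determinantal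
representations of the cubic defined by `F`. -/
def LDRcl (k : Type) [Field k] (F : MvPolynomial (Fin 3) k) : Type :=
  Quot (LDRRel k F)

/-- Two plane cubics are projectively equivalent if a linear change of projective
coordinates carries one defining form to a nonzero scalar multiple of the other. -/
def ProjEquiv (k : Type) [Field k] (F F' : MvPolynomial (Fin 3) k) : Prop :=
  ∃ (T : GL (Fin 3) k) (μ : k), μ ≠ 0 ∧
    F' = MvPolynomial.C μ *
      (MvPolynomial.aeval fun j => ∑ i : Fin 3,
        MvPolynomial.C ((T : Matrix (Fin 3) (Fin 3) k) i j) * MvPolynomial.X i) F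

section NormalForm

variable {R : Type*} [CommRing R]

/-- The normalized cubic `F` of the paper, in the variables `X, Y, Z = X 0, X 1, X 2`. -/
noncomputable def normalCubic (a011 a012 a022 a111 a112 a122 a222 : R) :
    MvPolynomial (Fin 3) R :=
  X 2 * X 0 ^ 2
    + (C a011 * X 1 ^ 2 + C a012 * X 1 * X 2 + C a022 * X 2 ^ 2) * X 0
    + (C a111 * X 1 ^ 3 + C a112 * X 1 ^ 2 * X 2 + C a122 * X 1 * X 2 ^ 2 + C a222 * X 2 ^ 3)

/-- The matrix `M_P` attached to the point `P = [s : t : u]`. -/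
noncomputable def pointMatrix (a011 a012 a022 a111 a112 a122 s t u : R) :
    Matrix (Fin 3) (Fin 3) (MvPolynomial (Fin 3) R) :=
  !![(0 : MvPolynomial (Fin 3) R), X 2, -X 1;
    C u * X 1 - C t * X 2, 0,
      -(C (u ^ 2) * X 0) - C (a011 * t ^ 2 + a012 * t * u + a022 * u ^ 2 + s * u) * X 2;
    C u * X 0 - C s * X 2,
      C (u ^ 2 * a011) * X 0 + C (u ^ 2 * a111) * X 1 + C (u * (a111 * t + a112 * u)) * X 2,
      C (u * (a011 * t + a012 * u)) * X 0 + C (a111 * t ^ 2 + a112 * t * u + a122 * u ^ 2) * X 2]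

/-- Valid for arbitrary `s, t, u`: for `u ≠ 0`, `M_P` represents the cubic exactly when
`[s : t : u]` lies on it. -/
theorem det_pointMatrix (a011 a012 a022 a111 a112 a122 a222 s t u : R) :
    (pointMatrix a011 a012 a022 a111 a112 a122 s t u).det
      = C (-u ^ 3) * normalCubic a011 a012 a022 a111 a112 a122 a222
        + C (eval ![s, t, u] (normalCubic a011 a012 a022 a111 a112 a122 a222)) * X 2 ^ 3 := by
  simp only [det_fin_three, pointMatrix, normalCubic, of_apply, cons_val', cons_val_zero,
    cons_val_one, cons_val_two, head_cons, tail_cons, empty_val', cons_val_fin_one,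
    head_fin_const, eval_X, eval_C, map_add, map_mul, map_pow, map_neg]
  ring

end NormalForm

theorem exists_ne_zero_eq_C_mul_of_eq_C_mul {σ k : Type*} [Field k]
    {F G : MvPolynomial σ k} {c : k} (hc : c ≠ 0) (h : G = C c * F) :
    ∃ lam : k, lam ≠ 0 ∧ F = C lam * G :=
  ⟨c⁻¹, inv_ne_zero hc, by rw [h, ← mul_assoc, ← C_mul, inv_mul_cancel₀ hc, C_1, one_mul]⟩

theorem stmt2 (k : Type) [Field k]
    (a011 a012 a022 a111 a112 a122 a222 s t u : k) (hu : u ≠ 0)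
    (F : MvPolynomial (Fin 3) k)
    (hF : F = X 2 * X 0 ^ 2
        + (C a011 * X 1 ^ 2 + C a012 * X 1 * X 2 + C a022 * X 2 ^ 2) * X 0
        + (C a111 * X 1 ^ 3 + C a112 * X 1 ^ 2 * X 2 + C a122 * X 1 * X 2 ^ 2
            + C a222 * X 2 ^ 3))
    (hP : MvPolynomial.eval ![s, t, u] F = 0)
    (M : Matrix (Fin 3) (Fin 3) (MvPolynomial (Fin 3) k))
    (hM : M = !![(0 : MvPolynomial (Fin 3) k), X 2, -X 1;
        C u * X 1 - C t * X 2, 0,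
          -(C (u ^ 2) * X 0)
            - C (a011 * t ^ 2 + a012 * t * u + a022 * u ^ 2 + s * u) * X 2;
        C u * X 0 - C s * X 2,
          C (u ^ 2 * a011) * X 0 + C (u ^ 2 * a111) * X 1
            + C (u * (a111 * t + a112 * u)) * X 2,
          C (u * (a011 * t + a012 * u)) * X 0
            + C (a111 * t ^ 2 + a112 * t * u + a122 * u ^ 2) * X 2]) :
    M.det = C (-u ^ 3) * F ∧ ∃ lam : k, lam ≠ 0 ∧ F = C lam * M.det := by
  have hdet : M.det = C (-u ^ 3) * F := by
    subst hF hM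
    have hP' : eval ![s, t, u] (normalCubic a011 a012 a022 a111 a112 a122 a222) = 0 := hP
    have h := det_pointMatrix a011 a012 a022 a111 a112 a122 a222 s t u
    rw [hP', C_0, zero_mul, add_zero] at h
    exact h
  exact ⟨hdet, exists_ne_zero_eq_C_mul_of_eq_C_mul (neg_ne_zero.2 (pow_ne_zero 3 hu)) hdet⟩
end

section
/- Let k be a field and let F = Z·X² + (a₀₁₁Y² + a₀₁₂YZ + a₀₂₂Z²)·X + (a₁₁₁Y³ + a₁₁₂Y²Z + a₁₂₂YZ² + a₂₂₂Z³) be a ternary cubic form over k with a₀₁₁ ≠ 0. Set L̃₁(X,Y,Z) = a₁₁₁X + (a₀₁₂a₁₁₁ − a₀₁₁a₁₁₂)Y and L̃₂(X,Y,Z) = (a₀₂₂a₁₁₁ − a₀₁₁a₁₂₂)Y − a₀₁₁a₂₂₂Z. Then the 3×3 matrix M_P with rows (0, Z, −Y), (Z, a₀₁₁Y, X + a₀₁₂Y + a₀₂₂Z), (a₀₁₁X + a₁₁₁Y, L̃₁(X,Y,Z), L̃₂(X,Y,Z)) satisfies det(M_P) = a₀₁₁·F(X,Y,Z) as polynomials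 in k[X,Y,Z]. In particular, M_P is a linear determinantal representation of the cubic defined by F over k. -/
open MvPolynomial Matrix

/-!
Expanding along the first row `(0, Z, -Y)`,
`det M_P = Z · ((X + a₀₁₂Y + a₀₂₂Z)(a₀₁₁X + a₁₁₁Y) − Z·L̃₂) − Y · (Z·L̃₁ − a₀₁₁Y(a₀₁₁X + a₁₁₁Y))`,
and the coefficients of `L̃₁` and `L̃₂` are chosen exactly so that this is `a₀₁₁ · F`.
Since `a₀₁₁` is a unit, `F = a₀₁₁⁻¹ · det M_P`.
-/

theorem det_normalFormMatrix {R : Type*} [CommRing R]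
    (a011 a012 a022 a111 a112 a122 a222 x y z : R) :
    !![0, z, -y;
        z, a011 * y, x + a012 * y + a022 * z;
        a011 * x + a111 * y,
          a111 * x + (a012 * a111 - a011 * a112) * y,
          (a022 * a111 - a011 * a122) * y - a011 * a222 * z].det
      = a011 * (z * x ^ 2 + (a011 * y ^ 2 + a012 * y * z + a022 * z ^ 2) * x
          + (a111 * y ^ 3 + a112 * y ^ 2 * z + a122 * y * z ^ 2 + a222 * z ^ 3)) := by
  rw [Matrix.det_fin_three]
  simp only [Matrix.of_apply, Matrix.cons_val', Matrix.cons_val_zero, Matrix.cons_val_one,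
    Matrix.cons_val_two, Matrix.head_cons, Matrix.tail_cons, Matrix.empty_val',
    Matrix.cons_val_fin_one, Matrix.head_fin_const]
  ring

theorem exists_ne_zero_eq_C_mul_of_C_mul_eq {k σ : Type*} [Field k] {c : k} (hc : c ≠ 0)
    {F D : MvPolynomial σ k} (h : D = C c * F) : ∃ lam : k, lam ≠ 0 ∧ F = C lam * D :=
  ⟨c⁻¹, inv_ne_zero hc, by rw [h, ← mul_assoc, ← C_mul, inv_mul_cancel₀ hc, C_1, one_mul]⟩

theorem stmt3 (k : Type) [Field k]
    (a011 a012 a022 a111 a112 a122 a222 : k) (ha : a011 ≠ 0)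
    (F : MvPolynomial (Fin 3) k)
    (hF : F = X 2 * X 0 ^ 2
        + (C a011 * X 1 ^ 2 + C a012 * X 1 * X 2 + C a022 * X 2 ^ 2) * X 0
        + (C a111 * X 1 ^ 3 + C a112 * X 1 ^ 2 * X 2 + C a122 * X 1 * X 2 ^ 2
            + C a222 * X 2 ^ 3))
    (M : Matrix (Fin 3) (Fin 3) (MvPolynomial (Fin 3) k))
    (hM : M = !![(0 : MvPolynomial (Fin 3) k), X 2, -X 1;
        X 2, C a011 * X 1, X 0 + C a012 * X 1 + C a022 * X 2;
        C a011 * X 0 + C a111 * X 1,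
          C a111 * X 0 + C (a012 * a111 - a011 * a112) * X 1,
          C (a022 * a111 - a011 * a122) * X 1 - C (a011 * a222) * X 2]) :
    M.det = C a011 * F ∧ ∃ lam : k, lam ≠ 0 ∧ F = C lam * M.det := by
  have hdet : M.det = C a011 * F := by
    simp only [hM, hF, C_sub, C_mul]
    exact det_normalFormMatrix _ _ _ _ _ _ _ _ _ _
  exact ⟨hdet, exists_ne_zero_eq_C_mul_of_C_mul_eq ha hdet⟩
end

section
/- Let k be a field, λ ∈ k, and a₀, a₁, a₂ ∈ k with a₀³ + a₁³ + a₂³ + λa₀a₁a₂ = 0. Then the Moore matrix M''_P with rows (a₀X, a₁Z, a₂Y), (a₁Y, a₂X, a₀Z), (a₂Z, a₀Y, a₁X) satisfies det(M''_P) = a₀a₁a₂ · (X³ + Y³ + Z³ + λXYZ) as polynomials in k[X,Y,Z]. In particular, if a₀a₁a₂ ≠ 0 then M''_P is a linear determinantal representation over k of the Hesse cubic X³ + Y³ + Z³ + λXYZ = 0. -/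
open MvPolynomial Matrix

theorem det_moore {R : Type*} [CommRing R] (a₀ a₁ a₂ x y z : R) :
    !![a₀ * x, a₁ * z, a₂ * y; a₁ * y, a₂ * x, a₀ * z; a₂ * z, a₀ * y, a₁ * x].det =
      a₀ * a₁ * a₂ * (x ^ 3 + y ^ 3 + z ^ 3) - (a₀ ^ 3 + a₁ ^ 3 + a₂ ^ 3) * x * y * z := by
  rw [det_fin_three]
  simp only [of_apply, cons_val', cons_val_zero, cons_val_one, cons_val_two, empty_val',
    cons_val_fin_one, head_cons, tail_cons, head_fin_const]
  ring

theorem det_moore_of_mem_hesse {R : Type*} [CommRing R] {lam a₀ a₁ a₂ : R}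
    (h : a₀ ^ 3 + a₁ ^ 3 + a₂ ^ 3 + lam * a₀ * a₁ * a₂ = 0) (x y z : R) :
    !![a₀ * x, a₁ * z, a₂ * y; a₁ * y, a₂ * x, a₀ * z; a₂ * z, a₀ * y, a₁ * x].det =
      a₀ * a₁ * a₂ * (x ^ 3 + y ^ 3 + z ^ 3 + lam * x * y * z) := by
  rw [det_moore]
  linear_combination (-(x * y * z)) * h

theorem stmt17 (k : Type) [Field k] (lam a0 a1 a2 : k)
    (h : a0 ^ 3 + a1 ^ 3 + a2 ^ 3 + lam * a0 * a1 * a2 = 0)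
    (M : Matrix (Fin 3) (Fin 3) (MvPolynomial (Fin 3) k))
    (hM : M = !![C a0 * X 0, C a1 * X 2, C a2 * X 1;
        C a1 * X 1, C a2 * X 0, C a0 * X 2;
        C a2 * X 2, C a0 * X 1, C a1 * X 0]) :
    M.det = C (a0 * a1 * a2) *
        (X 0 ^ 3 + X 1 ^ 3 + X 2 ^ 3 + C lam * X 0 * X 1 * X 2) ∧
      (a0 * a1 * a2 ≠ 0 → ∃ c : k, c ≠ 0 ∧
        X 0 ^ 3 + X 1 ^ 3 + X 2 ^ 3 + C lam * X 0 * X 1 * X 2 = C c * M.det) := by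
  have hdet : M.det = C (a0 * a1 * a2) *
      (X 0 ^ 3 + X 1 ^ 3 + X 2 ^ 3 + C lam * X 0 * X 1 * X 2) := by
    have hC : C a0 ^ 3 + C a1 ^ 3 + C a2 ^ 3 + C lam * C a0 * C a1 * C a2 =
        (0 : MvPolynomial (Fin 3) k) := by
      simp only [← map_pow, ← map_mul, ← map_add, h, map_zero]
    rw [hM, det_moore_of_mem_hesse hC, map_mul, map_mul]
  refine ⟨hdet, fun hne => ⟨(a0 * a1 * a2)⁻¹, inv_ne_zero hne, ?_⟩⟩
  rw [hdet, ← mul_assoc, ← map_mul, inv_mul_cancel₀ hne, map_one, one_mul]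
end

section
/- Let k be a field, a, b ∈ k, and λ, μ ∈ k with μ² = λ³ + aλ + b. Then the 3×3 matrix M'_P with rows (X − λZ, 0, −Y − μZ), (μZ − Y, X + λZ, (a + λ²)Z), (0, Z, −X) satisfies det(M'_P) = Y²Z − X³ − aXZ² − bZ³ as polynomials in k[X,Y,Z]. In particular, M'_P is a linear determinantal representation over k of the plane cubic defined by the Weierstrass equation Y²Z − X³ − aXZ² − bZ³ = 0. -/
open MvPolynomial Matrix

/-- Cofactor expansion gives `y²z - x³ - Axz² - Bz³ + (l³ + Al + B - m²) z³`, and the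
correction term vanishes because `(l, m)` lies on `y² = x³ + Ax + B`. -/
theorem det_weierstrassRepresentation {R : Type*} [CommRing R] {A B l m : R}
    (hP : m ^ 2 = l ^ 3 + A * l + B) (x y z : R) :
    !![x - l * z, 0, -y - m * z;
        m * z - y, x + l * z, (A + l ^ 2) * z;
        0, z, -x].det = y ^ 2 * z - x ^ 3 - A * x * z ^ 2 - B * z ^ 3 := by
  rw [det_fin_three]
  simp only [of_apply, cons_val', cons_val_zero, cons_val_one, cons_val_two, head_cons,
    tail_cons, empty_val', cons_val_fin_one, head_fin_const]
  linear_combination (-z ^ 3) * hP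

theorem stmt19 (k : Type) [Field k] (a b lam mu : k)
    (h : mu ^ 2 = lam ^ 3 + a * lam + b)
    (F : MvPolynomial (Fin 3) k)
    (hF : F = X 1 ^ 2 * X 2 - X 0 ^ 3 - C a * X 0 * X 2 ^ 2 - C b * X 2 ^ 3)
    (M : Matrix (Fin 3) (Fin 3) (MvPolynomial (Fin 3) k))
    (hM : M = !![X 0 - C lam * X 2, 0, -X 1 - C mu * X 2;
        C mu * X 2 - X 1, X 0 + C lam * X 2, C (a + lam ^ 2) * X 2;
        0, X 2, -X 0]) :
    M.det = F ∧ ∃ c : k, c ≠ 0 ∧ F = C c * M.det := by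
  have hP : (C mu : MvPolynomial (Fin 3) k) ^ 2 = C lam ^ 3 + C a * C lam + C b := by
    simp only [← map_pow, ← map_mul, ← map_add, h]
  have hdet : M.det = F := by
    rw [hM, hF, map_add, map_pow]
    exact det_weierstrassRepresentation hP _ _ _
  exact ⟨hdet, 1, one_ne_zero, by rw [map_one, one_mul, hdet]⟩
end
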